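/- arXiv:2104.11205 — 3 statements merged into one kernel-verified Lean document; each statement's English description precedes it below -/
import Mathlib

section
/- Let S be a closed convex subset of ℝ^m with nonempty interior, equipped with an affine preorder ≿. Suppose f : S → ℝ is 1-Lipschitz and ≿-increasing, f is differentiable at an interior point z ∈ S with derivative (gradient) g, and f(z) = 0 after translating so z = 0. Then the linear function x ↦ g·x restricted to S is ≿-increasing. -/
/-!
An affine preorder is invariant under the homotheties `p ↦ n⁻¹ • p` centred at `0 ∈ S`, so a
`≿`-increasing `f` satisfies `f (n⁻¹ • y) ≤ f (n⁻¹ • x)` whenever `x ≿ y`. Multiplying by `n` and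
letting `n → ∞` turns these into difference quotients of `f` at `0`, whose limits are `g y ≤ g x`.
-/

open Filter Topology

theorem HasFDerivAt.apply_le_apply_of_forall_nat_inv_smul {E : Type*} [NormedAddCommGroup E]
    [NormedSpace ℝ E] {f : E → ℝ} {g : E →L[ℝ] ℝ} {a : E} (hf : HasFDerivAt f g a) {x y : E}
    (hle : ∀ n : ℕ, 0 < n → f (a + (n : ℝ)⁻¹ • y) ≤ f (a + (n : ℝ)⁻¹ • x)) :
    g y ≤ g x := by
  have hn : Tendsto (fun n : ℕ => ‖(n : ℝ)‖) atTop atTop := by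
    simpa only [Real.norm_natCast] using tendsto_natCast_atTop_atTop
  refine le_of_tendsto_of_tendsto (hf.lim y hn) (hf.lim x hn) ?_
  filter_upwards [eventually_gt_atTop 0] with n hpos
  exact smul_le_smul_of_nonneg_left (sub_le_sub_right (hle n hpos) _) n.cast_nonneg

theorem rel_inv_smul_of_affine {E : Type*} [AddCommGroup E] [Module ℝ E] {S : Set E}
    {R : E → E → Prop} (hS : Convex ℝ S) (h0 : (0 : E) ∈ S)
    (haff : ∀ p ∈ S, ∀ q ∈ S, ∀ r ∈ S, ∀ lam : ℝ, 0 ≤ lam → lam < 1 →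
      (R p q ↔ R ((1 - lam) • p + lam • r) ((1 - lam) • q + lam • r)))
    {x y : E} (hx : x ∈ S) (hy : y ∈ S) (hxy : R x y) {n : ℕ} (hn : 0 < n) :
    (n : ℝ)⁻¹ • x ∈ S ∧ (n : ℝ)⁻¹ • y ∈ S ∧ R ((n : ℝ)⁻¹ • x) ((n : ℝ)⁻¹ • y) := by
  have hpos : (0 : ℝ) < (n : ℝ)⁻¹ := by positivity
  have hle : (n : ℝ)⁻¹ ≤ 1 := inv_le_one_of_one_le₀ (by exact_mod_cast hn)
  refine ⟨hS.smul_mem_of_zero_mem h0 hx ⟨hpos.le, hle⟩,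
    hS.smul_mem_of_zero_mem h0 hy ⟨hpos.le, hle⟩, ?_⟩
  simpa using (haff x hx y hy 0 h0 (1 - (n : ℝ)⁻¹) (by linarith) (by linarith)).mp hxy

theorem stmt16_general {m : ℕ}
    (S : Set (EuclideanSpace ℝ (Fin m)))
    (hconv : Convex ℝ S)
    (hz : (0 : EuclideanSpace ℝ (Fin m)) ∈ interior S)
    (R : EuclideanSpace ℝ (Fin m) → EuclideanSpace ℝ (Fin m) → Prop)
    -- affinity of the preorder on S:
    (haff : ∀ p ∈ S, ∀ q ∈ S, ∀ r ∈ S, ∀ lam : ℝ, 0 ≤ lam → lam < 1 →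
      (R p q ↔ R ((1 - lam) • p + lam • r) ((1 - lam) • q + lam • r)))
    (f : EuclideanSpace ℝ (Fin m) → ℝ)
    (hfinc : ∀ x ∈ S, ∀ y ∈ S, R x y → f y ≤ f x)
    (g : EuclideanSpace ℝ (Fin m) →L[ℝ] ℝ)
    (hdiff : HasFDerivAt f g 0) :
    ∀ x ∈ S, ∀ y ∈ S, R x y → g y ≤ g x := by
  intro x hx y hy hxy
  refine hdiff.apply_le_apply_of_forall_nat_inv_smul fun n hn => ?_
  obtain ⟨hxn, hyn, hxyn⟩ := rel_inv_smul_of_affine hconv (interior_subset hz) haff hx hy hxy hn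
  simpa only [zero_add] using hfinc _ hxn _ hyn hxyn

theorem stmt16 {m : ℕ}
    (S : Set (EuclideanSpace ℝ (Fin m)))
    (hclosed : IsClosed S) (hconv : Convex ℝ S)
    (hz : (0 : EuclideanSpace ℝ (Fin m)) ∈ interior S)
    (R : EuclideanSpace ℝ (Fin m) → EuclideanSpace ℝ (Fin m) → Prop)
    (hrefl : ∀ p ∈ S, R p p)
    (htrans : ∀ p ∈ S, ∀ q ∈ S, ∀ r ∈ S, R p q → R q r → R p r)
    -- affinity of the preorder on S:
    (haff : ∀ p ∈ S, ∀ q ∈ S, ∀ r ∈ S, ∀ lam : ℝ, 0 ≤ lam → lam < 1 →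
      (R p q ↔ R ((1 - lam) • p + lam • r) ((1 - lam) • q + lam • r)))
    (f : EuclideanSpace ℝ (Fin m) → ℝ)
    (hf1 : LipschitzOnWith 1 f S)
    (hfinc : ∀ x ∈ S, ∀ y ∈ S, R x y → f y ≤ f x)
    (g : EuclideanSpace ℝ (Fin m) →L[ℝ] ℝ)
    (hdiff : HasFDerivAt f g 0) (hf0 : f 0 = 0) :
    ∀ x ∈ S, ∀ y ∈ S, R x y → g y ≤ g x :=
  stmt16_general S hconv hz R haff f hfinc g hdiff
end

section
/- Let X be a separable metric space and ≿ a W₁-continuous preorder on Δ₁(X). Define ⊵ on Δ₁(X) by p ⊵ q iff (1−λ)p + λr ≿ (1−λ)q + λr for every r ∈ Δ₁(X) and λ ∈ [0,1]. Then ⊵ is an affine preorder, it is contained in ≿, and it contains every affine subrelation of ≿ (i.e., ⊵ is the affine core of ≿). -/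
open MeasureTheory

/-- A real-valued Lipschitz function. -/
def IsLip {X : Type*} [MetricSpace X] (f : X → ℝ) : Prop :=
  ∃ K : NNReal, LipschitzWith K f

/-- Membership in Δ₁(X). -/
def MemDelta1 {X : Type*} [MetricSpace X] [MeasurableSpace X] (p : Measure X) : Prop :=
  IsProbabilityMeasure p ∧ ∀ f : X → ℝ, IsLip f → Integrable f p

/-- The Wasserstein 1-metric, via Kantorovich–Rubinstein duality. -/
noncomputable def W1 {X : Type*} [MetricSpace X] [MeasurableSpace X]
    (p q : Measure X) : ℝ :=
  ⨆ f : {f : X → ℝ // LipschitzWith 1 f}, |∫ x, f.1 x ∂p - ∫ x, f.1 x ∂q|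

/-- The mixture (1 − λ)p + λq of two measures. -/
noncomputable def mix {X : Type*} [MeasurableSpace X] (p q : Measure X) (lam : ℝ) :
    Measure X :=
  ENNReal.ofReal (1 - lam) • p + ENNReal.ofReal lam • q

/-- The preorder ≿ is affine on Δ₁(X). -/
def AffinePre {X : Type*} [MetricSpace X] [MeasurableSpace X]
    (R : Measure X → Measure X → Prop) : Prop :=
  ∀ p q r : Measure X, MemDelta1 p → MemDelta1 q → MemDelta1 r →
    ∀ lam : ℝ, 0 ≤ lam → lam < 1 →
      (R p q ↔ R (mix p r lam) (mix q r lam))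

/-- The preorder ≿ is Lipschitz on Δ₁(X). -/
def LipschitzPre {X : Type*} [MetricSpace X] [MeasurableSpace X]
    (R : Measure X → Measure X → Prop) : Prop :=
  ∀ p q : Measure X, MemDelta1 p → MemDelta1 q → ¬ R q p →
    ∃ K : ℝ, 0 < K ∧ ∀ p' q' : Measure X, MemDelta1 p' → MemDelta1 q' →
      ∀ lam : ℝ, 0 ≤ lam → lam < K / (K + W1 p' q') →
        ¬ R (mix q q' lam) (mix p p' lam)

/-- The candidate affine core: p ⊵ q iff every mixture of p with a common lottery is
preferred to the corresponding mixture of q. -/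
def affCore {X : Type*} [MetricSpace X] [MeasurableSpace X]
    (R : Measure X → Measure X → Prop) (p q : Measure X) : Prop :=
  ∀ r : Measure X, MemDelta1 r → ∀ lam : ℝ, 0 ≤ lam → lam ≤ 1 →
    R (mix p r lam) (mix q r lam)


set_option linter.unusedSectionVars false
set_option linter.unusedVariables false

namespace S17

variable {X : Type*} [MetricSpace X] [MeasurableSpace X]

noncomputable def cb (a : ℝ) (m : Measure X) : Measure X := ENNReal.ofReal a • m

lemma mix_eq_cb (p q : Measure X) (lam : ℝ) : mix p q lam = cb (1-lam) p + cb lam q := rfl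

lemma cb_cb {a : ℝ} (ha : 0 ≤ a) (b : ℝ) (m : Measure X) :
    cb a (cb b m) = cb (a*b) m := by
  simp [cb, smul_smul, ← ENNReal.ofReal_mul ha]

lemma cb_add (a : ℝ) (m m' : Measure X) : cb a (m + m') = cb a m + cb a m' := smul_add _ _ _

lemma cb_same {a b : ℝ} (ha : 0 ≤ a) (hb : 0 ≤ b) (m : Measure X) :
    cb (a+b) m = cb a m + cb b m := by
  simp [cb, ENNReal.ofReal_add ha hb, add_smul]

lemma cb_zero (m : Measure X) : cb 0 m = 0 := by simp [cb]
lemma cb_one (m : Measure X) : cb 1 m = m := by simp [cb]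

lemma mix_zero (p r : Measure X) : mix p r 0 = p := by
  rw [mix_eq_cb]; norm_num [cb_one, cb_zero]
lemma mix_one (p r : Measure X) : mix p r 1 = r := by
  rw [mix_eq_cb]; norm_num [cb_one, cb_zero]

lemma integrable_cb {f : X → ℝ} {m : Measure X} (a : ℝ) (h : Integrable f m) :
    Integrable f (cb a m) := h.smul_measure ENNReal.ofReal_ne_top

lemma integral_cb (f : X → ℝ) {a : ℝ} (ha : 0 ≤ a) (m : Measure X) :
    ∫ x, f x ∂(cb a m) = a * ∫ x, f x ∂m := by
  simp [cb, integral_smul_measure, ENNReal.toReal_ofReal ha]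

lemma cb_univ {a : ℝ} {p : Measure X} (hp : IsProbabilityMeasure p) :
    (cb a p) Set.univ = ENNReal.ofReal a := by
  simp [cb, Measure.smul_apply, measure_univ]

lemma memDelta1_cb2 {a b : ℝ} (ha : 0 ≤ a) (hb : 0 ≤ b) (hab : a + b = 1)
    {p q : Measure X} (hp : MemDelta1 p) (hq : MemDelta1 q) :
    MemDelta1 (cb a p + cb b q) := by
  refine ⟨⟨?_⟩, fun f hf => (integrable_cb a (hp.2 f hf)).add_measure (integrable_cb b (hq.2 f hf))⟩
  rw [Measure.add_apply, cb_univ hp.1, cb_univ hq.1, ← ENNReal.ofReal_add ha hb, hab,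
    ENNReal.ofReal_one]

lemma memDelta1_cb3 {a b d : ℝ} (ha : 0 ≤ a) (hb : 0 ≤ b) (hd : 0 ≤ d) (hs : a + b + d = 1)
    {p q w : Measure X} (hp : MemDelta1 p) (hq : MemDelta1 q) (hw : MemDelta1 w) :
    MemDelta1 (cb a p + cb b q + cb d w) := by
  refine ⟨⟨?_⟩, fun f hf => ((integrable_cb a (hp.2 f hf)).add_measure
    (integrable_cb b (hq.2 f hf))).add_measure (integrable_cb d (hw.2 f hf))⟩
  rw [Measure.add_apply, Measure.add_apply, cb_univ hp.1, cb_univ hq.1, cb_univ hw.1,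
    ← ENNReal.ofReal_add ha hb, ← ENNReal.ofReal_add (add_nonneg ha hb) hd, hs,
    ENNReal.ofReal_one]

lemma memDelta1_cb4 {a b d e : ℝ} (ha : 0 ≤ a) (hb : 0 ≤ b) (hd : 0 ≤ d) (he : 0 ≤ e)
    (hs : a + b + d + e = 1)
    {p q w v : Measure X} (hp : MemDelta1 p) (hq : MemDelta1 q) (hw : MemDelta1 w)
    (hv : MemDelta1 v) :
    MemDelta1 (cb a p + cb b q + cb d w + cb e v) := by
  refine ⟨⟨?_⟩, fun f hf => (((integrable_cb a (hp.2 f hf)).add_measure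
    (integrable_cb b (hq.2 f hf))).add_measure (integrable_cb d (hw.2 f hf))).add_measure
    (integrable_cb e (hv.2 f hf))⟩
  rw [Measure.add_apply, Measure.add_apply, Measure.add_apply, cb_univ hp.1, cb_univ hq.1,
    cb_univ hw.1, cb_univ hv.1, ← ENNReal.ofReal_add ha hb,
    ← ENNReal.ofReal_add (add_nonneg ha hb) hd,
    ← ENNReal.ofReal_add (add_nonneg (add_nonneg ha hb) hd) he, hs, ENNReal.ofReal_one]

lemma mix_mem {p r : Measure X} (hp : MemDelta1 p) (hr : MemDelta1 r) {lam : ℝ}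
    (h0 : 0 ≤ lam) (h1 : lam ≤ 1) : MemDelta1 (mix p r lam) := by
  rw [mix_eq_cb]
  exact memDelta1_cb2 (by linarith) h0 (by ring) hp hr

lemma integral_cb2 {f : X → ℝ} {p q : Measure X} {a b : ℝ} (ha : 0 ≤ a) (hb : 0 ≤ b)
    (hfp : Integrable f p) (hfq : Integrable f q) :
    ∫ x, f x ∂(cb a p + cb b q) = a * ∫ x, f x ∂p + b * ∫ x, f x ∂q := by
  rw [integral_add_measure (integrable_cb a hfp) (integrable_cb b hfq),
    integral_cb f ha, integral_cb f hb]

lemma integral_cb4 {f : X → ℝ} {p q w v : Measure X} {a b d e : ℝ}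
    (ha : 0 ≤ a) (hb : 0 ≤ b) (hd : 0 ≤ d) (he : 0 ≤ e)
    (hfp : Integrable f p) (hfq : Integrable f q) (hfw : Integrable f w) (hfv : Integrable f v) :
    ∫ x, f x ∂(cb a p + cb b q + cb d w + cb e v) =
      a * ∫ x, f x ∂p + b * ∫ x, f x ∂q + d * ∫ x, f x ∂w + e * ∫ x, f x ∂v := by
  rw [integral_add_measure (((integrable_cb a hfp).add_measure (integrable_cb b hfq)).add_measure
      (integrable_cb d hfw)) (integrable_cb e hfv),
    integral_add_measure ((integrable_cb a hfp).add_measure (integrable_cb b hfq))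
      (integrable_cb d hfw),
    integral_add_measure (integrable_cb a hfp) (integrable_cb b hfq),
    integral_cb f ha, integral_cb f hb, integral_cb f hd, integral_cb f he]

lemma W1_nonneg (p q : Measure X) : 0 ≤ W1 p q := Real.iSup_nonneg fun f => abs_nonneg _

lemma W1_le {p q : Measure X} {C : ℝ} (hC : 0 ≤ C)
    (h : ∀ f : X → ℝ, LipschitzWith 1 f → |∫ x, f x ∂p - ∫ x, f x ∂q| ≤ C) : W1 p q ≤ C :=
  Real.iSup_le (fun f => h f.1 f.2) hC

lemma lip_dist (x0 : X) : LipschitzWith 1 (fun x : X => dist x x0) :=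
  LipschitzWith.of_dist_le_mul fun x y => by
    rw [NNReal.coe_one, one_mul, Real.dist_eq]; exact abs_dist_sub_le x y x0

lemma abs_integral_sub_le (x0 : X) {f : X → ℝ} (hf : LipschitzWith 1 f)
    {p q : Measure X} (hp : MemDelta1 p) (hq : MemDelta1 q) :
    |∫ x, f x ∂p - ∫ x, f x ∂q| ≤ (∫ x, dist x x0 ∂p) + (∫ x, dist x x0 ∂q) := by
  have key : ∀ (m : Measure X), MemDelta1 m → |(∫ x, f x ∂m) - f x0| ≤ ∫ x, dist x x0 ∂m := by
    intro m hm
    haveI := hm.1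
    have hint : Integrable f m := hm.2 f ⟨1, hf⟩
    have hdist : Integrable (fun x => dist x x0) m := hm.2 _ ⟨1, lip_dist x0⟩
    have h1 : (∫ x, f x ∂m) - f x0 = ∫ x, (f x - f x0) ∂m := by
      rw [integral_sub hint (integrable_const _), integral_const]; simp
    rw [h1]
    calc |∫ x, (f x - f x0) ∂m| ≤ ∫ x, |f x - f x0| ∂m := by simpa using norm_integral_le_integral_norm (μ := m) (fun x => f x - f x0)
      _ ≤ ∫ x, dist x x0 ∂m := by
        refine integral_mono (hint.sub (integrable_const _)).abs hdist fun x => ?_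
        rw [← Real.dist_eq]
        simpa using hf.dist_le_mul x x0
  have hp' := key p hp
  have hq' := key q hq
  have : |(∫ x, f x ∂p) - ∫ x, f x ∂q| ≤ |(∫ x, f x ∂p) - f x0| + |(∫ x, f x ∂q) - f x0| := by
    have := abs_sub ((∫ x, f x ∂p) - f x0) ((∫ x, f x ∂q) - f x0)
    simpa [sub_sub_sub_cancel_right] using this
  linarith

end S17

-- appended to S17 namespace
namespace S17
set_option linter.unusedSectionVars false

variable {X : Type*} [MetricSpace X] [MeasurableSpace X]

/-- Normal form for a mixture of `mix p r lam` with a 3-component lottery. -/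
lemma mix_mix_comb (p r w₁ w₂ w₃ : Measure X) (lam ν a b d : ℝ)
    (hν0 : 0 ≤ ν) (hν1 : ν ≤ 1) (hνne : ν ≠ 0) :
    mix (mix p r lam) (cb (a/ν) w₁ + cb (b/ν) w₂ + cb (d/ν) w₃) ν =
      cb ((1-ν)*(1-lam)) p + cb ((1-ν)*lam) r + cb a w₁ + cb b w₂ + cb d w₃ := by
  have h1 : (0:ℝ) ≤ 1 - ν := by linarith
  have e : ∀ x : ℝ, ν * (x/ν) = x := fun x => by field_simp
  simp only [mix_eq_cb, cb_add, cb_cb h1, cb_cb hν0, e]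
  abel

/-- Normal form for a mixture of `p` with a 2-component lottery. -/
lemma mix_mix_right (p r s : Measure X) (κ θ : ℝ) (hκ : 0 ≤ κ) :
    mix p (mix r s θ) κ = cb (1-κ) p + cb (κ*(1-θ)) r + cb (κ*θ) s := by
  simp only [mix_eq_cb, cb_add, cb_cb hκ]
  abel

noncomputable def Dd (lam : ℝ) (n : ℕ) : ℝ := ((n:ℝ)+2)*(1-lam)+lam
noncomputable def dd (lam μ : ℝ) (n : ℕ) : ℝ := (1-μ)*(1-lam)/Dd lam n
noncomputable def cc (lam μ : ℝ) (n : ℕ) : ℝ := (1-μ)*lam/Dd lam n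
noncomputable def nn (lam μ : ℝ) (n : ℕ) : ℝ := 1 - dd lam μ n - cc lam μ n

noncomputable def EE (p q r r' : Measure X) (lam μ : ℝ) (n k : ℕ) : Measure X :=
  cb (((n:ℝ)+2-(k:ℝ))*dd lam μ n) p + cb ((k:ℝ)*dd lam μ n) q + cb (cc lam μ n) r + cb μ r'

noncomputable def ss (p q r' : Measure X) (lam μ : ℝ) (n k : ℕ) : Measure X :=
  cb ((((n:ℝ)+2-((k:ℝ)+1))*dd lam μ n)/nn lam μ n) p +
    cb (((k:ℝ)*dd lam μ n)/nn lam μ n) q + cb (μ/nn lam μ n) r'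

section numeric
variable {lam μ : ℝ} (hlam0 : 0 < lam) (hlam1 : lam < 1) (hμ0 : 0 ≤ μ) (hμ1 : μ < 1) (n : ℕ)

include hlam1 in
lemma one_lt_Dd : 1 < Dd lam n := by
  have : (0:ℝ) ≤ (n:ℝ) := Nat.cast_nonneg n
  unfold Dd; nlinarith

include hlam1 in
lemma Dd_pos : 0 < Dd lam n := lt_trans one_pos (one_lt_Dd hlam1 n)

include hlam1 hμ1 in
lemma dd_pos : 0 < dd lam μ n :=
  div_pos (mul_pos (by linarith) (by linarith)) (Dd_pos hlam1 n)

include hlam0 hlam1 hμ1 in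
lemma cc_pos : 0 < cc lam μ n :=
  div_pos (mul_pos (by linarith) hlam0) (Dd_pos hlam1 n)

include hlam1 hμ0 hμ1 in
lemma hkey : ((n:ℝ)+2)*dd lam μ n + cc lam μ n = 1-μ := by
  have hD : Dd lam n ≠ 0 := ne_of_gt (Dd_pos hlam1 n)
  unfold dd cc
  field_simp
  unfold Dd; ring

include hlam1 hμ0 hμ1 in
lemma sum_dc : dd lam μ n + cc lam μ n = (1-μ)/Dd lam n := by
  unfold dd cc; ring

include hlam1 hμ0 hμ1 in
lemma nn_pos : 0 < nn lam μ n := by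
  have h1 : (1-μ)/Dd lam n < 1 := by
    rw [div_lt_one (Dd_pos hlam1 n)]
    exact lt_of_le_of_lt (by linarith) (one_lt_Dd hlam1 n)
  have := sum_dc hlam1 hμ0 hμ1 n
  unfold nn; linarith

include hlam0 hlam1 hμ0 hμ1 in
lemma nn_le_one : nn lam μ n ≤ 1 := by
  have h1 := dd_pos hlam1 hμ1 n
  have h2 := cc_pos hlam0 hlam1 hμ1 n
  unfold nn; linarith

include hlam1 hμ0 hμ1 in
lemma e1 : (1 - nn lam μ n)*(1-lam) = dd lam μ n := by
  have hs : 1 - nn lam μ n = (1-μ)/Dd lam n := by unfold nn dd cc; ring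
  rw [hs, div_mul_eq_mul_div]; rfl

include hlam1 hμ0 hμ1 in
lemma e2 : (1 - nn lam μ n)*lam = cc lam μ n := by
  have hs : 1 - nn lam μ n = (1-μ)/Dd lam n := by unfold nn dd cc; ring
  rw [hs, div_mul_eq_mul_div]; rfl

end numeric

end S17

namespace S17
set_option linter.unusedSectionVars false

variable {X : Type*} [MetricSpace X] [MeasurableSpace X]

section chain
variable {p q r r' : Measure X} {lam μ : ℝ}
  (hp : MemDelta1 p) (hq : MemDelta1 q) (hr : MemDelta1 r) (hr' : MemDelta1 r')
  (hlam0 : 0 < lam) (hlam1 : lam < 1) (hμ0 : 0 ≤ μ) (hμ1 : μ < 1)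

include hlam0 hlam1 hμ0 hμ1 in
lemma mix_ss_p (n k : ℕ) (hk : (k:ℝ)+1 ≤ (n:ℝ)+2) :
    mix (mix p r lam) (ss p q r' lam μ n k) (nn lam μ n) = EE p q r r' lam μ n k := by
  have hn0 := nn_pos hlam1 hμ0 hμ1 n
  rw [ss, mix_mix_comb p r p q r' lam (nn lam μ n) _ _ _ hn0.le
    (nn_le_one hlam0 hlam1 hμ0 hμ1 n) (ne_of_gt hn0),
    e1 hlam1 hμ0 hμ1 n, e2 hlam1 hμ0 hμ1 n, EE,
    show ((n:ℝ)+2-(k:ℝ))*dd lam μ n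
        = dd lam μ n + ((n:ℝ)+2-((k:ℝ)+1))*dd lam μ n from by ring,
    cb_same (dd_pos hlam1 hμ1 n).le
      (mul_nonneg (by linarith) (dd_pos hlam1 hμ1 n).le)]
  abel

include hlam0 hlam1 hμ0 hμ1 in
lemma mix_ss_q (n k : ℕ) (hk : (k:ℝ)+1 ≤ (n:ℝ)+2) :
    mix (mix q r lam) (ss p q r' lam μ n k) (nn lam μ n) = EE p q r r' lam μ n (k+1) := by
  have hn0 := nn_pos hlam1 hμ0 hμ1 n
  rw [ss, mix_mix_comb q r p q r' lam (nn lam μ n) _ _ _ hn0.le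
    (nn_le_one hlam0 hlam1 hμ0 hμ1 n) (ne_of_gt hn0),
    e1 hlam1 hμ0 hμ1 n, e2 hlam1 hμ0 hμ1 n, EE]
  push_cast
  rw [show ((k:ℝ)+1)*dd lam μ n = dd lam μ n + (k:ℝ)*dd lam μ n from by ring,
    cb_same (dd_pos hlam1 hμ1 n).le
      (mul_nonneg (Nat.cast_nonneg k) (dd_pos hlam1 hμ1 n).le)]
  abel

include hp hq hr hr' hlam0 hlam1 hμ0 hμ1 in
lemma memDelta1_EE (n k : ℕ) (hk : (k:ℝ) ≤ (n:ℝ)+2) :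
    MemDelta1 (EE p q r r' lam μ n k) := by
  have h1 := dd_pos hlam1 hμ1 n
  have h2 := cc_pos hlam0 hlam1 hμ1 n
  have hkey := hkey hlam1 hμ0 hμ1 n
  exact memDelta1_cb4 (mul_nonneg (by linarith) h1.le)
    (mul_nonneg (Nat.cast_nonneg k) h1.le) h2.le hμ0
    (by linear_combination hkey) hp hq hr hr'

include hp hq hr' hlam0 hlam1 hμ0 hμ1 in
lemma memDelta1_ss (n k : ℕ) (hk : (k:ℝ)+1 ≤ (n:ℝ)+2) :
    MemDelta1 (ss p q r' lam μ n k) := by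
  have h1 := dd_pos hlam1 hμ1 n
  have hn0 := nn_pos hlam1 hμ0 hμ1 n
  have hkey := hkey hlam1 hμ0 hμ1 n
  have hcc := cc_pos hlam0 hlam1 hμ1 n
  refine memDelta1_cb3 (div_nonneg (mul_nonneg (by linarith) h1.le) hn0.le)
    (div_nonneg (mul_nonneg (Nat.cast_nonneg k) h1.le) hn0.le)
    (div_nonneg hμ0 hn0.le) ?_ hp hq hr'
  rw [← add_div, ← add_div, div_eq_one_iff_eq (ne_of_gt hn0)]
  unfold nn
  linear_combination hkey

end chain
end S17

namespace S17
set_option linter.unusedSectionVars false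

variable {X : Type*} [MetricSpace X] [MeasurableSpace X]

lemma forward (R : Measure X → Measure X → Prop) {p q r : Measure X}
    (hp : MemDelta1 p) (hq : MemDelta1 q) (hr : MemDelta1 r) {lam : ℝ}
    (h0 : 0 ≤ lam) (h1 : lam < 1) (hpq : affCore R p q) :
    affCore R (mix p r lam) (mix q r lam) := by
  intro s hs ν hν0 hν1
  by_cases hκz : (1:ℝ) - (1-ν)*(1-lam) = 0
  · have hl : lam = 0 := by nlinarith
    have hv : ν = 0 := by nlinarith
    rw [hl, hv]
    simp only [mix_zero]
    have := hpq p hp 0 le_rfl zero_le_one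
    rwa [mix_zero, mix_zero] at this
  · set κ : ℝ := 1 - (1-ν)*(1-lam) with hκdef
    have hκ0 : 0 < κ := by
      rcases lt_or_eq_of_le (show (0:ℝ) ≤ κ from by nlinarith) with h | h
      · exact h
      · exact absurd h.symm hκz
    have hνκ : ν ≤ κ := by nlinarith
    have hκ1 : κ ≤ 1 := by nlinarith
    have hw : MemDelta1 (mix r s (ν/κ)) :=
      mix_mem hr hs (div_nonneg hν0 hκ0.le) ((div_le_one hκ0).mpr hνκ)
    have H := hpq (mix r s (ν/κ)) hw κ hκ0.le hκ1
    have hid : ∀ m : Measure X, mix m (mix r s (ν/κ)) κ = mix (mix m r lam) s ν := by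
      intro m
      rw [mix_mix_right m r s κ (ν/κ) hκ0.le,
        show κ*(1-ν/κ) = (1-ν)*lam from by field_simp; ring,
        show κ*(ν/κ) = ν from by field_simp,
        show (1:ℝ)-κ = (1-ν)*(1-lam) from by rw [hκdef]; ring]
      have hexp : mix (mix m r lam) s ν
          = cb ((1-ν)*(1-lam)) m + cb ((1-ν)*lam) r + cb ν s := by
        simp only [mix_eq_cb, cb_add, cb_cb (show (0:ℝ) ≤ 1-ν from by linarith)]
        try abel
      rw [hexp]
    rw [hid p, hid q] at H
    exact H

lemma backward (R : Measure X → Measure X → Prop)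
    (hrefl : ∀ p : Measure X, MemDelta1 p → R p p)
    (htrans : ∀ p q r : Measure X, MemDelta1 p → MemDelta1 q → MemDelta1 r →
      R p q → R q r → R p r)
    (hcont : ∀ (pn qn : ℕ → Measure X) (p q : Measure X),
      (∀ n, MemDelta1 (pn n) ∧ MemDelta1 (qn n) ∧ R (pn n) (qn n)) →
      MemDelta1 p → MemDelta1 q →
      Filter.Tendsto (fun n => W1 (pn n) p) Filter.atTop (nhds 0) →
      Filter.Tendsto (fun n => W1 (qn n) q) Filter.atTop (nhds 0) →
      R p q)
    {p q r : Measure X} (hp : MemDelta1 p) (hq : MemDelta1 q) (hr : MemDelta1 r) {lam : ℝ}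
    (h0 : 0 ≤ lam) (h1 : lam < 1)
    (G : affCore R (mix p r lam) (mix q r lam)) : affCore R p q := by
  intro r' hr' μ hμ0 hμ1
  rcases eq_or_lt_of_le h0 with hl0 | hlpos
  · rw [← hl0, mix_zero, mix_zero] at G
    exact G r' hr' μ hμ0 hμ1
  rcases eq_or_lt_of_le hμ1 with hμe | hμlt
  · rw [hμe, mix_one, mix_one]
    exact hrefl r' hr'
  -- X is nonempty
  have hX : Nonempty X := by
    by_contra h
    haveI : IsEmpty X := not_nonempty_iff.mp h
    haveI := hp.1
    have h1 : p Set.univ = 1 := measure_univ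
    rw [Set.univ_eq_empty_iff.mpr ‹IsEmpty X›, measure_empty] at h1
    exact one_ne_zero h1.symm
  obtain ⟨x0⟩ := hX
  -- membership facts
  have hmemE : ∀ n k : ℕ, (k:ℝ) ≤ (n:ℝ)+2 → MemDelta1 (EE p q r r' lam μ n k) :=
    fun n k hk => memDelta1_EE hp hq hr hr' hlpos h1 hμ0 hμlt n k hk
  -- transitivity chain
  have chain : ∀ n : ℕ, R (EE p q r r' lam μ n 0) (EE p q r r' lam μ n (n+2)) := by
    intro n
    have step : ∀ k : ℕ, (k:ℝ)+1 ≤ (n:ℝ)+2 →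
        R (EE p q r r' lam μ n k) (EE p q r r' lam μ n (k+1)) := by
      intro k hk
      have hG := G (ss p q r' lam μ n k)
        (memDelta1_ss hp hq hr' hlpos h1 hμ0 hμlt n k hk)
        (nn lam μ n) (nn_pos h1 hμ0 hμlt n).le (nn_le_one hlpos h1 hμ0 hμlt n)
      rwa [mix_ss_p hlpos h1 hμ0 hμlt n k hk, mix_ss_q hlpos h1 hμ0 hμlt n k hk] at hG
    have ind : ∀ k : ℕ, k ≤ n+2 → R (EE p q r r' lam μ n 0) (EE p q r r' lam μ n k) := by
      intro k
      induction k with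
      | zero =>
        intro _
        exact hrefl _ (hmemE n 0 (by push_cast; positivity))
      | succ k ih =>
        intro hk
        have hk' : k ≤ n+2 := Nat.le_of_succ_le hk
        have hkr : (k:ℝ)+1 ≤ (n:ℝ)+2 := by exact_mod_cast hk
        exact htrans _ _ _ (hmemE n 0 (by push_cast; positivity))
          (hmemE n k (by linarith [hkr])) (hmemE n (k+1) (by push_cast; linarith [hkr]))
          (ih hk') (step k hkr)
    exact ind (n+2) le_rfl
  -- target measures
  have hmemP : MemDelta1 (mix p r' μ) := mix_mem hp hr' hμ0 hμ1
  have hmemQ : MemDelta1 (mix q r' μ) := mix_mem hq hr' hμ0 hμ1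
  -- integrals
  have hCnonneg : ∀ m : Measure X, MemDelta1 m → 0 ≤ ∫ x, dist x x0 ∂m :=
    fun m _ => integral_nonneg fun x => dist_nonneg
  -- integral difference computations
  have hdiffP : ∀ n : ℕ, ∀ f : X → ℝ, LipschitzWith 1 f →
      (∫ x, f x ∂(EE p q r r' lam μ n 0)) - (∫ x, f x ∂(mix p r' μ))
        = cc lam μ n * ((∫ x, f x ∂r) - (∫ x, f x ∂p)) := by
    intro n f hf
    have hdd := dd_pos h1 hμlt n
    have hkeyn := hkey h1 hμ0 hμlt n
    have hip := hp.2 f ⟨1, hf⟩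
    have hiq := hq.2 f ⟨1, hf⟩
    have hir := hr.2 f ⟨1, hf⟩
    have hir' := hr'.2 f ⟨1, hf⟩
    rw [EE, integral_cb4
        (mul_nonneg (by push_cast; linarith [Nat.cast_nonneg (α := ℝ) n]) hdd.le)
        (mul_nonneg (Nat.cast_nonneg 0) hdd.le)
        (cc_pos hlpos h1 hμlt n).le hμ0 hip hiq hir hir',
      mix_eq_cb, integral_cb2 (by linarith) hμ0 hip hir']
    push_cast
    linear_combination (∫ x, f x ∂p) * hkeyn
  have hdiffQ : ∀ n : ℕ, ∀ f : X → ℝ, LipschitzWith 1 f →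
      (∫ x, f x ∂(EE p q r r' lam μ n (n+2))) - (∫ x, f x ∂(mix q r' μ))
        = cc lam μ n * ((∫ x, f x ∂r) - (∫ x, f x ∂q)) := by
    intro n f hf
    have hdd := dd_pos h1 hμlt n
    have hkeyn := hkey h1 hμ0 hμlt n
    have hip := hp.2 f ⟨1, hf⟩
    have hiq := hq.2 f ⟨1, hf⟩
    have hir := hr.2 f ⟨1, hf⟩
    have hir' := hr'.2 f ⟨1, hf⟩
    rw [EE, integral_cb4
        (le_of_eq (by push_cast; ring))
        (mul_nonneg (Nat.cast_nonneg (n+2)) hdd.le)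
        (cc_pos hlpos h1 hμlt n).le hμ0 hip hiq hir hir',
      mix_eq_cb, integral_cb2 (by linarith) hμ0 hiq hir']
    push_cast
    linear_combination (∫ x, f x ∂q) * hkeyn
  -- cc tends to 0
  have hDtop : Filter.Tendsto (fun n : ℕ => Dd lam n) Filter.atTop Filter.atTop := by
    have ht1 : Filter.Tendsto (fun n : ℕ => ((n:ℝ)+2)) Filter.atTop Filter.atTop :=
      Filter.tendsto_atTop_add_const_right _ 2 tendsto_natCast_atTop_atTop
    have ht2 := ht1.atTop_mul_const (show (0:ℝ) < 1-lam by linarith)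
    simpa [Dd] using Filter.tendsto_atTop_add_const_right _ lam ht2
  have hccto : Filter.Tendsto (fun n => cc lam μ n) Filter.atTop (nhds 0) := by
    have := Filter.Tendsto.div_atTop
      (tendsto_const_nhds : Filter.Tendsto (fun _ : ℕ => (1-μ)*lam) Filter.atTop (nhds ((1-μ)*lam)))
      hDtop
    simpa [cc] using this
  -- W1 bounds
  have hW1P : Filter.Tendsto (fun n => W1 (EE p q r r' lam μ n 0) (mix p r' μ))
      Filter.atTop (nhds 0) := by
    have hC1 : 0 ≤ (∫ x, dist x x0 ∂r) + (∫ x, dist x x0 ∂p) :=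
      add_nonneg (hCnonneg r hr) (hCnonneg p hp)
    refine squeeze_zero (fun n => W1_nonneg _ _)
      (fun n => ?_) (by simpa using hccto.mul_const ((∫ x, dist x x0 ∂r) + (∫ x, dist x x0 ∂p)))
    refine W1_le (mul_nonneg (cc_pos hlpos h1 hμlt n).le hC1) fun f hf => ?_
    rw [hdiffP n f hf, abs_mul, abs_of_nonneg (cc_pos hlpos h1 hμlt n).le]
    exact mul_le_mul_of_nonneg_left (abs_integral_sub_le x0 hf hr hp)
      (cc_pos hlpos h1 hμlt n).le
  have hW1Q : Filter.Tendsto (fun n => W1 (EE p q r r' lam μ n (n+2)) (mix q r' μ))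
      Filter.atTop (nhds 0) := by
    have hC1 : 0 ≤ (∫ x, dist x x0 ∂r) + (∫ x, dist x x0 ∂q) :=
      add_nonneg (hCnonneg r hr) (hCnonneg q hq)
    refine squeeze_zero (fun n => W1_nonneg _ _)
      (fun n => ?_) (by simpa using hccto.mul_const ((∫ x, dist x x0 ∂r) + (∫ x, dist x x0 ∂q)))
    refine W1_le (mul_nonneg (cc_pos hlpos h1 hμlt n).le hC1) fun f hf => ?_
    rw [hdiffQ n f hf, abs_mul, abs_of_nonneg (cc_pos hlpos h1 hμlt n).le]
    exact mul_le_mul_of_nonneg_left (abs_integral_sub_le x0 hf hr hq)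
      (cc_pos hlpos h1 hμlt n).le
  exact hcont (fun n => EE p q r r' lam μ n 0) (fun n => EE p q r r' lam μ n (n+2))
    (mix p r' μ) (mix q r' μ)
    (fun n => ⟨hmemE n 0 (by push_cast; positivity),
      hmemE n (n+2) (by push_cast; exact le_refl _), chain n⟩)
    hmemP hmemQ hW1P hW1Q

end S17


theorem stmt17 {X : Type*} [MetricSpace X] [TopologicalSpace.SeparableSpace X]
    [MeasurableSpace X] [BorelSpace X]
    (R : Measure X → Measure X → Prop)
    (hrefl : ∀ p : Measure X, MemDelta1 p → R p p)
    (htrans : ∀ p q r : Measure X, MemDelta1 p → MemDelta1 q → MemDelta1 r →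
      R p q → R q r → R p r)
    -- W₁-continuity of ≿ (sequential closedness w.r.t. W₁-convergence):
    (hcont : ∀ (pn qn : ℕ → Measure X) (p q : Measure X),
      (∀ n, MemDelta1 (pn n) ∧ MemDelta1 (qn n) ∧ R (pn n) (qn n)) →
      MemDelta1 p → MemDelta1 q →
      Filter.Tendsto (fun n => W1 (pn n) p) Filter.atTop (nhds 0) →
      Filter.Tendsto (fun n => W1 (qn n) q) Filter.atTop (nhds 0) →
      R p q) :
    -- ⊵ is a preorder on Δ₁(X):
    (∀ p : Measure X, MemDelta1 p → affCore R p p) ∧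
    (∀ p q r : Measure X, MemDelta1 p → MemDelta1 q → MemDelta1 r →
      affCore R p q → affCore R q r → affCore R p r) ∧
    -- ⊵ is affine:
    AffinePre (affCore R) ∧
    -- ⊵ is contained in ≿:
    (∀ p q : Measure X, MemDelta1 p → MemDelta1 q → affCore R p q → R p q) ∧
    -- ⊵ contains every affine subrelation of ≿:
    (∀ R' : Measure X → Measure X → Prop,
      (∀ p q : Measure X, MemDelta1 p → MemDelta1 q → R' p q → R p q) →
      AffinePre R' →
      ∀ p q : Measure X, MemDelta1 p → MemDelta1 q → R' p q → affCore R p q) := by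
  refine ⟨?_, ?_, ?_, ?_, ?_⟩
  · intro p hp r hr lam h0 h1
    exact hrefl _ (S17.mix_mem hp hr h0 h1)
  · intro p q r hp hq hr hpq hqr r' hr' lam h0 h1
    exact htrans _ _ _ (S17.mix_mem hp hr' h0 h1) (S17.mix_mem hq hr' h0 h1)
      (S17.mix_mem hr hr' h0 h1) (hpq r' hr' lam h0 h1) (hqr r' hr' lam h0 h1)
  · intro p q r hp hq hr lam h0 h1
    constructor
    · exact fun h => S17.forward R hp hq hr h0 h1 h
    · exact fun h => S17.backward R hrefl htrans hcont hp hq hr h0 h1 h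
  · intro p q hp hq h
    have := h p hp 0 le_rfl zero_le_one
    rwa [S17.mix_zero, S17.mix_zero] at this
  · intro R' hsub haff p q hp hq hpq r hr lam h0 h1
    rcases eq_or_lt_of_le h1 with he | hlt
    · rw [he, S17.mix_one, S17.mix_one]
      exact hrefl r hr
    · exact hsub _ _ (S17.mix_mem hp hr h0 hlt.le) (S17.mix_mem hq hr h0 hlt.le)
        ((haff p q r hp hq hr lam h0 hlt).mp hpq)
end

section
/- Let X be a separable metric space with base point, and let ≿ be a preorder on Δ₁(X) admitting a Lipschitz Bernoulli multi-utility 𝒰 ⊆ Lip₀(X) that is weak*-compact (equivalently, bounded in Lipschitz norm by some M and pointwise-closed), strictly ≿-increasing, and such that the strict part ≻ is nonempty. Then for each q ∈ Δ₁(X), the set {p ∈ Δ₁(X) : p ≻ q} is open in the W₁ metric. In particular, if p ≻ q then there is ε > 0 with ∫ u d(p−q) > ε for all u ∈ 𝒰, and every p' with W₁(p',p) < ε/M satisfies p' ≻ q. -/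
open MeasureTheory

lemma kr_bound {X : Type*} [MetricSpace X] [MeasurableSpace X] (e : X)
    {p p' : Measure X} (hp : MemDelta1 p) (hp' : MemDelta1 p')
    {f : X → ℝ} (hf : LipschitzWith 1 f) :
    |∫ x, f x ∂p' - ∫ x, f x ∂p| ≤ W1 p' p := by
  haveI := hp.1
  haveI := hp'.1
  have hdint : ∀ (μ : Measure X), MemDelta1 μ → Integrable (fun x => dist x e) μ :=
    fun μ hμ => hμ.2 _ ⟨1, LipschitzWith.dist_left e⟩
  have bdd : BddAbove (Set.range fun g : {g : X → ℝ // LipschitzWith 1 g} =>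
      |∫ x, g.1 x ∂p' - ∫ x, g.1 x ∂p|) := by
    refine ⟨(∫ x, dist x e ∂p') + ∫ x, dist x e ∂p, ?_⟩
    rintro y ⟨g, rfl⟩
    have hint' : Integrable g.1 p' := hp'.2 _ ⟨1, g.2⟩
    have hint : Integrable g.1 p := hp.2 _ ⟨1, g.2⟩
    have key : ∀ (μ : Measure X), MemDelta1 μ → Integrable g.1 μ →
        |∫ x, g.1 x ∂μ - g.1 e| ≤ ∫ x, dist x e ∂μ := by
      intro μ hμ hi
      haveI := hμ.1
      have h1 : ∫ x, g.1 x ∂μ - g.1 e = ∫ x, (g.1 x - g.1 e) ∂μ := by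
        rw [integral_sub hi (integrable_const _), integral_const]
        simp
      rw [h1]
      calc |∫ x, (g.1 x - g.1 e) ∂μ| ≤ ∫ x, |g.1 x - g.1 e| ∂μ := by
            simpa using norm_integral_le_integral_norm (fun x => g.1 x - g.1 e) (μ := μ)
        _ ≤ ∫ x, dist x e ∂μ := by
            apply integral_mono (hi.sub (integrable_const _)).abs (hdint μ hμ)
            intro x
            simpa [Real.dist_eq] using g.2.dist_le_mul x e
    calc |∫ x, g.1 x ∂p' - ∫ x, g.1 x ∂p|
        = |(∫ x, g.1 x ∂p' - g.1 e) - (∫ x, g.1 x ∂p - g.1 e)| := by ring_nf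
      _ ≤ |∫ x, g.1 x ∂p' - g.1 e| + |∫ x, g.1 x ∂p - g.1 e| := abs_sub _ _
      _ ≤ (∫ x, dist x e ∂p') + ∫ x, dist x e ∂p :=
          add_le_add (key p' hp' hint') (key p hp hint)
  exact le_ciSup bdd ⟨f, hf⟩

open Topology Filter

theorem stmt18 {X : Type*} [MetricSpace X] [TopologicalSpace.SeparableSpace X]
    [MeasurableSpace X] [BorelSpace X] (e : X)
    (𝒰 : Set (X → ℝ)) (M : ℝ) (hM : 0 < M)
    -- 𝒰 ⊆ Lip₀(X) bounded in Lipschitz norm by M: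
    (h𝒰 : ∀ u ∈ 𝒰, u e = 0 ∧ LipschitzWith (Real.toNNReal M) u)
    -- weak* compactness (compactness for the topology of pointwise convergence):
    (hcpt : IsCompact 𝒰)
    (R : Measure X → Measure X → Prop)
    -- 𝒰 is a Bernoulli multi-utility for ≿:
    (hrep : ∀ p q : Measure X, MemDelta1 p → MemDelta1 q →
      (R p q ↔ ∀ u ∈ 𝒰, ∫ x, u x ∂q ≤ ∫ x, u x ∂p))
    -- 𝒰 is strictly ≿-increasing:
    (hstrict : ∀ p q : Measure X, MemDelta1 p → MemDelta1 q →
      (R p q ∧ ¬ R q p) → ∀ u ∈ 𝒰, ∫ x, u x ∂q < ∫ x, u x ∂p)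
    -- the strict part of ≿ is nonempty:
    (hne : ∃ p q : Measure X, MemDelta1 p ∧ MemDelta1 q ∧ R p q ∧ ¬ R q p) :
    ∀ q p : Measure X, MemDelta1 q → MemDelta1 p → (R p q ∧ ¬ R q p) →
      ∃ ε : ℝ, 0 < ε ∧
        (∀ u ∈ 𝒰, ε < ∫ x, u x ∂p - ∫ x, u x ∂q) ∧
        (∀ p' : Measure X, MemDelta1 p' → W1 p' p < ε / M →
          R p' q ∧ ¬ R q p') := by
  haveI : Nonempty X := ⟨e⟩
  -- 𝒰 is nonempty
  have hUne : 𝒰.Nonempty := by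
    by_contra h
    obtain ⟨p₀, q₀, hp₀, hq₀, _, hn⟩ := hne
    exact hn ((hrep q₀ p₀ hq₀ hp₀).mpr fun u hu => absurd ⟨u, hu⟩ h)
  intro q p hq hp hpq
  -- integrability of members of 𝒰
  have hintU : ∀ (μ : Measure X), MemDelta1 μ → ∀ u ∈ 𝒰, Integrable u μ :=
    fun μ hμ u hu => hμ.2 u ⟨_, (h𝒰 u hu).2⟩
  -- first countability of the subtype 𝒰
  haveI : CompactSpace ↥𝒰 := isCompact_iff_compactSpace.mp hcpt
  set d : ℕ → X := TopologicalSpace.denseSeq X with hd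
  have hdd : DenseRange d := TopologicalSpace.denseRange_denseSeq X
  set F : ↥𝒰 → (ℕ → ℝ) := fun u n => u.1 (d n) with hF
  have hFc : Continuous F :=
    continuous_pi fun n => (continuous_apply (d n)).comp continuous_subtype_val
  have hFinj : Function.Injective F := by
    intro u v huv
    have hu : Continuous u.1 := (h𝒰 u.1 u.2).2.continuous
    have hv : Continuous v.1 := (h𝒰 v.1 v.2).2.continuous
    refine Subtype.ext (Continuous.ext_on hdd hu hv ?_)
    rintro x ⟨n, rfl⟩
    exact congrFun huv n
  have hemb := hFc.isClosedEmbedding hFinj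
  have hncg : ∀ u₀ : ↥𝒰, (𝓝 u₀).IsCountablyGenerated := by
    intro u₀
    rw [hemb.isEmbedding.isInducing.nhds_eq_comap]
    exact Filter.comap.isCountablyGenerated _ _
  -- continuity of integration on 𝒰
  have key : ∀ (μ : Measure X), MemDelta1 μ → ∀ u₀ : ↥𝒰,
      Filter.Tendsto (fun u : ↥𝒰 => ∫ x, u.1 x ∂μ) (𝓝 u₀) (𝓝 (∫ x, u₀.1 x ∂μ)) := by
    intro μ hμ u₀
    haveI := hncg u₀
    apply tendsto_integral_filter_of_dominated_convergence (fun x => M * dist x e)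
    · exact Filter.Eventually.of_forall fun u =>
        ((h𝒰 u.1 u.2).2.continuous).aestronglyMeasurable
    · refine Filter.Eventually.of_forall fun u => Filter.Eventually.of_forall fun x => ?_
      have h1 := (h𝒰 u.1 u.2).2.dist_le_mul x e
      have h2 := (h𝒰 u.1 u.2).1
      rw [Real.dist_eq, h2, sub_zero] at h1
      simpa [Real.coe_toNNReal _ hM.le] using h1
    · exact (hμ.2 (fun x => dist x e) ⟨1, LipschitzWith.dist_left e⟩).const_mul M
    · refine Filter.Eventually.of_forall fun x => ?_
      exact ((continuous_apply x).comp continuous_subtype_val).continuousAt.tendsto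
  have hGc : Continuous (fun u : ↥𝒰 => ∫ x, u.1 x ∂p - ∫ x, u.1 x ∂q) := by
    rw [continuous_iff_continuousAt]
    exact fun u₀ => (key p hp u₀).sub (key q hq u₀)
  -- minimum of the gap over compact 𝒰
  haveI : Nonempty ↥𝒰 := ⟨⟨hUne.choose, hUne.choose_spec⟩⟩
  obtain ⟨u₀, -, hmin'⟩ := isCompact_univ.exists_isMinOn Set.univ_nonempty hGc.continuousOn
  have hmin : ∀ u : ↥𝒰, (∫ x, u₀.1 x ∂p - ∫ x, u₀.1 x ∂q) ≤ ∫ x, u.1 x ∂p - ∫ x, u.1 x ∂q :=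
    fun u => hmin' (Set.mem_univ u)
  set c : ℝ := ∫ x, u₀.1 x ∂p - ∫ x, u₀.1 x ∂q with hc
  have hcpos : 0 < c := sub_pos.mpr (hstrict p q hp hq hpq u₀.1 u₀.2)
  refine ⟨c / 2, by linarith, ?_, ?_⟩
  · intro u hu
    have := hmin ⟨u, hu⟩
    simp only at this
    linarith
  · intro p' hp' hw
    -- KR estimate: |∫ u dp' − ∫ u dp| < c/2 for all u ∈ 𝒰
    have hest : ∀ u ∈ 𝒰, |∫ x, u x ∂p' - ∫ x, u x ∂p| < c / 2 := by
      intro u hu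
      set f : X → ℝ := fun x => M⁻¹ * u x with hfdef
      have hf1 : LipschitzWith 1 f := by
        apply LipschitzWith.of_dist_le_mul
        intro x y
        have h1 := (h𝒰 u hu).2.dist_le_mul x y
        rw [Real.coe_toNNReal _ hM.le] at h1
        rw [Real.dist_eq]
        have : f x - f y = M⁻¹ * (u x - u y) := by rw [hfdef]; ring
        rw [this, abs_mul, abs_of_pos (inv_pos.mpr hM)]
        calc M⁻¹ * |u x - u y| ≤ M⁻¹ * (M * dist x y) := by
              apply mul_le_mul_of_nonneg_left _ (inv_pos.mpr hM).le
              simpa [Real.dist_eq] using h1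
          _ = 1 * dist x y := by field_simp
      have hkr := kr_bound e hp hp' hf1
      have hintf : ∀ (μ : Measure X), ∫ x, f x ∂μ = M⁻¹ * ∫ x, u x ∂μ := by
        intro μ; rw [hfdef]; exact integral_const_mul _ _
      rw [hintf, hintf, ← mul_sub, abs_mul, abs_of_pos (inv_pos.mpr hM)] at hkr
      have : M⁻¹ * |∫ x, u x ∂p' - ∫ x, u x ∂p| < c / 2 / M := lt_of_le_of_lt hkr hw
      calc |∫ x, u x ∂p' - ∫ x, u x ∂p|
          = M * (M⁻¹ * |∫ x, u x ∂p' - ∫ x, u x ∂p|) := by field_simp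
        _ < M * (c / 2 / M) := by exact mul_lt_mul_of_pos_left this hM
        _ = c / 2 := by field_simp
    have hgap : ∀ u ∈ 𝒰, ∫ x, u x ∂q < ∫ x, u x ∂p' := by
      intro u hu
      have h1 := hmin ⟨u, hu⟩
      simp only at h1
      have h2 := hest u hu
      have h3 : ∫ x, u x ∂p' - ∫ x, u x ∂p > -(c / 2) := by
        have := neg_abs_le (∫ x, u x ∂p' - ∫ x, u x ∂p)
        linarith
      linarith
    refine ⟨(hrep p' q hp' hq).mpr fun u hu => (hgap u hu).le, ?_⟩
    intro hcon
    have := (hrep q p' hq hp').mp hcon u₀.1 u₀.2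
    exact absurd this (not_le.mpr (hgap u₀.1 u₀.2))
end
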